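/- In the algebra U with generators a, x, y and relations xa = qax, ya = q^{-1}ay, yx - q^{-n₁}xy = β₃(a^{2n₁} - a^{mn(n₂+n₃)}) over a field K with q a primitive n-th root of unity, the element λ = (1/N) (∑_{i=0}^{N-1} a^i) x^{n-1} y^{n-1}, where N = n(n-1)m and a^N = 1, satisfies hλ = ε(h)λ = λh for all h in the Hopf algebra H_{α,β}; i.e., λ is a two-sided integral. Moreover ε(λ) = 0, so H_{α,β} is not semisimple. -/

import Mathlib

/-!
Write `S = ∑_{i<N} a^i`, so that `λ = N⁻¹ • S x^{n-1} y^{n-1}`. Pushing `x` or `y` leftwards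
through `S` turns it into a twisted sum `σ_r = ∑ r^i a^i`, and `σ_r a = r⁻¹ σ_r`; so all the
products `u` that occur satisfy `u a = c u` for an `n`-th root of unity `c`. Such a `u` is killed
by `x^n` and `y^n`, which are differences of powers `a^{kn}`. The commutation formulas for
`y x^{n-1}` and `y^{n-1} x` leave only such terms and terms `u (w^{n-2} a^{2n₁} - a^{mn(n₂+n₃)})`
with `w = q^{-n₁}` and `u a = q⁻¹ u`, which vanish because `w^n = 1`. Hence `a`, `x`, `y`, and
with them all of `H`, act on `λ` from both sides through `ε`. Finally `ε(λ) = 0` since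
`ε(x) = 0`, and in a semisimple ring the ideal `Hλ` would be generated by an idempotent `e`,
forcing `λ = λ e = ε(e) λ = 0`.
-/

open Finset

section SkewCommute

variable {K A : Type*} [Field K] [Ring A] [Algebra K A]

theorem pow_mul_eq_smul_mul_pow {x a : A} {q : K} (h : x * a = q • (a * x)) :
    ∀ k : ℕ, x ^ k * a = q ^ k • (a * x ^ k)
  | 0 => by simp
  | k + 1 => by
    rw [pow_succ, mul_assoc, h, mul_smul_comm, ← mul_assoc, pow_mul_eq_smul_mul_pow h k,
      smul_mul_assoc, smul_smul, mul_assoc, ← pow_succ, ← pow_succ']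

theorem mul_pow_eq_smul_pow_mul {x a : A} {q : K} (h : x * a = q • (a * x)) :
    ∀ e : ℕ, x * a ^ e = q ^ e • (a ^ e * x)
  | 0 => by simp
  | e + 1 => by
    rw [pow_succ, ← mul_assoc, mul_pow_eq_smul_pow_mul h e, smul_mul_assoc, mul_assoc, h,
      mul_smul_comm, smul_smul, ← mul_assoc, ← pow_succ]

theorem mul_pow_eq_smul_of_mul_eq_smul {u a : A} {c : K} (h : u * a = c • u) :
    ∀ e : ℕ, u * a ^ e = c ^ e • u
  | 0 => by simp
  | e + 1 => by
    rw [pow_succ, ← mul_assoc, mul_pow_eq_smul_of_mul_eq_smul h e, smul_mul_assoc, h, smul_smul,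
      ← pow_succ]

theorem pow_eq_one_of_dvd {M : Type*} [Monoid M] {c : M} {n j : ℕ} (hc : c ^ n = 1)
    (hj : n ∣ j) : c ^ j = 1 := by
  obtain ⟨i, rfl⟩ := hj
  rw [pow_mul, hc, one_pow]

theorem mul_pow_eq_self_of_dvd {u a : A} {c : K} {n e : ℕ} (h : u * a = c • u) (hc : c ^ n = 1)
    (he : n ∣ e) : u * a ^ e = u := by
  rw [mul_pow_eq_smul_of_mul_eq_smul h, pow_eq_one_of_dvd hc he, one_smul]

theorem mul_pow_mul_eq_smul {u a x : A} {c q : K} (hu : u * a = c • u) (hx : x * a = q • (a * x))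
    (k : ℕ) : u * x ^ k * a = (c * q ^ k) • (u * x ^ k) := by
  rw [mul_assoc, pow_mul_eq_smul_mul_pow hx, mul_smul_comm, ← mul_assoc, hu, smul_mul_assoc,
    smul_smul, mul_comm]

theorem mul_smul_pow_sub_pow_eq_zero {u a : A} {c : K} {n i j : ℕ} (h : u * a = c • u)
    (hc : c ^ n = 1) (hi : n ∣ i) (hj : n ∣ j) (β : K) : u * β • (a ^ i - a ^ j) = 0 := by
  rw [mul_smul_comm, mul_sub, mul_pow_eq_self_of_dvd h hc hi, mul_pow_eq_self_of_dvd h hc hj,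
    sub_self, smul_zero]

theorem mul_relator_eq_zero {u a : A} {c : K} {k j : ℕ} (hu : u * a = c • u)
    (hc : c ^ (k + 2) = 1) (hj : k + 2 ∣ j) (n₁ : ℕ) :
    u * ((c ^ n₁) ^ k • a ^ (2 * n₁) - a ^ j) = 0 := by
  have hscalar : (c ^ n₁) ^ k * c ^ (2 * n₁) = 1 := by
    rw [pow_mul', ← pow_add, ← pow_mul, mul_comm, pow_mul, hc, one_pow]
  rw [mul_sub, mul_smul_comm, mul_pow_eq_smul_of_mul_eq_smul hu, smul_smul, hscalar, one_smul,
    mul_pow_eq_self_of_dvd hu hc hj, sub_self]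

theorem mul_pow_succ_eq_of_sub_eq {w c : K} {x y P Q : A}
    (hyx : y * x - w • (x * y) = c • (P - Q)) (hPx : P * x = w ^ 2 • (x * P))
    (hQx : Q * x = x * Q) (k : ℕ) :
    y * x ^ (k + 1) = w ^ (k + 1) • (x ^ (k + 1) * y) +
      (c * ∑ j ∈ range (k + 1), w ^ j) • (x ^ k * (w ^ k • P - Q)) := by
  have hyx' : y * x = w • (x * y) + c • (P - Q) := (sub_eq_iff_eq_add').mp hyx
  induction k with
  | zero => simpa using hyx'
  | succ k ih =>
    have hgeom :
        w * ∑ j ∈ range (k + 1), w ^ j + 1 = ∑ j ∈ range (k + 1), w ^ j + w ^ (k + 1) := by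
      rw [← geom_sum_succ, sum_range_succ]
    rw [pow_succ, ← mul_assoc, ih, add_mul, smul_mul_assoc, mul_assoc, hyx', smul_mul_assoc,
      mul_assoc, sub_mul, smul_mul_assoc, hPx, hQx, sum_range_succ _ (k + 1)]
    simp only [mul_add, mul_sub, smul_add, smul_sub, mul_smul_comm, smul_smul, ← mul_assoc,
      ← pow_succ]
    match_scalars
    · ring
    · linear_combination (w ^ (k + 1) * c) * hgeom
    · ring

theorem pow_succ_mul_eq_of_sub_eq {w c : K} {x y P Q : A}
    (hyx : y * x - w • (x * y) = c • (P - Q)) (hyP : y * P = w ^ 2 • (P * y))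
    (hyQ : y * Q = Q * y) (k : ℕ) :
    y ^ (k + 1) * x = w ^ (k + 1) • (x * y ^ (k + 1)) +
      (c * ∑ j ∈ range (k + 1), w ^ j) • ((w ^ k • P - Q) * y ^ k) := by
  have := mul_pow_succ_eq_of_sub_eq (x := MulOpposite.op y) (y := MulOpposite.op x)
    (P := MulOpposite.op P) (Q := MulOpposite.op Q) (by simpa using congrArg MulOpposite.op hyx)
    (by simpa using congrArg MulOpposite.op hyP) (by simpa using congrArg MulOpposite.op hyQ) k
  apply MulOpposite.op_injective
  simpa using this

end SkewCommute

section TwistedSum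

variable {K A : Type*} [Field K] [Ring A] [Algebra K A]

def twistedSum (a : A) (r : K) (N : ℕ) : A := ∑ i ∈ range N, r ^ i • a ^ i

theorem twistedSum_one (a : A) (N : ℕ) : twistedSum a (1 : K) N = ∑ i ∈ range N, a ^ i := by
  simp [twistedSum]

theorem mul_twistedSum {x a : A} {q : K} (h : x * a = q • (a * x)) (r : K) (N : ℕ) :
    x * twistedSum a r N = twistedSum a (q * r) N * x := by
  simp only [twistedSum, mul_sum, sum_mul, mul_smul_comm, mul_pow_eq_smul_pow_mul h, smul_smul,
    smul_mul_assoc, mul_pow, mul_comm]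

theorem twistedSum_mul {a : A} {r : K} {N : ℕ} (ha : a ^ N = 1) (hr : r ^ N = 1) :
    twistedSum a r N * a = r⁻¹ • twistedSum a r N := by
  rcases N with _ | N
  · simp [twistedSum]
  have hr0 : r ≠ 0 := by rintro rfl; simp at hr
  have hshift : r • (twistedSum a r (N + 1) * a) = twistedSum a r (N + 1) := by
    simp only [twistedSum, sum_mul, smul_sum, smul_mul_assoc, smul_smul, ← pow_succ, ← pow_succ']
    rw [sum_range_succ, sum_range_succ' _ N, ha, hr, pow_zero, pow_zero]
  rw [eq_inv_smul_iff₀ hr0, hshift]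

end TwistedSum

section Integral

variable {K A : Type*} [Field K] [Ring A] [Algebra K A]

def IsTwoSidedIntegral (ε : A →ₐ[K] K) (l : A) : Prop :=
  ∀ h : A, h * l = ε h • l ∧ l * h = ε h • l

theorem IsTwoSidedIntegral.smul {ε : A →ₐ[K] K} {l : A} (hl : IsTwoSidedIntegral ε l) (c : K) :
    IsTwoSidedIntegral ε (c • l) := fun h =>
  ⟨by rw [mul_smul_comm, (hl h).1, smul_comm], by rw [smul_mul_assoc, (hl h).2, smul_comm]⟩

theorem isTwoSidedIntegral_of_adjoin_eq_top {S : Set A} (hS : Algebra.adjoin K S = ⊤)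
    (ε : A →ₐ[K] K) {l : A} (hl : ∀ s ∈ S, s * l = ε s • l ∧ l * s = ε s • l) :
    IsTwoSidedIntegral ε l := by
  intro h
  have hh : h ∈ Algebra.adjoin K S := hS ▸ Algebra.mem_top
  induction hh using Algebra.adjoin_induction with
  | mem s hs => exact hl s hs
  | algebraMap r =>
    rw [AlgHom.commutes, ← Algebra.commutes, ← Algebra.smul_def]
    exact ⟨rfl, rfl⟩
  | add u v _ _ hu hv =>
    simp only [add_mul, mul_add, hu.1, hu.2, hv.1, hv.2, map_add, add_smul, and_self]
  | mul u v _ _ hu hv =>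
    constructor
    · rw [mul_assoc, hv.1, mul_smul_comm, hu.1, smul_smul, map_mul, mul_comm (ε u)]
    · rw [← mul_assoc, hu.2, smul_mul_assoc, hv.2, smul_smul, map_mul]

theorem IsSemisimpleRing.eq_zero_of_mul_eq_smul [IsSemisimpleRing A] {ε : A →ₐ[K] K} {l : A}
    (hl : ∀ h : A, l * h = ε h • l) (hεl : ε l = 0) : l = 0 := by
  obtain ⟨e, he, hspan⟩ := IsSemisimpleRing.ideal_eq_span_idempotent (Ideal.span {l})
  obtain ⟨r, hr⟩ := Ideal.mem_span_singleton'.mp (hspan ▸ Ideal.mem_span_singleton_self e)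
  obtain ⟨s, hs⟩ := Ideal.mem_span_singleton'.mp (hspan ▸ Ideal.mem_span_singleton_self l)
  have hεe : ε e = 0 := by rw [← hr, map_mul, hεl, mul_zero]
  calc l = s * e * e := by rw [mul_assoc, he.eq, hs]
    _ = l * e := by rw [hs]
    _ = 0 := by rw [hl, hεe, zero_smul]

end Integral

section Presentation

variable {K A : Type*} [Field K] [Ring A] [Algebra K A]

structure HRelations (n m n₁ n₂ n₃ : ℕ) (q β₁ β₂ β₃ : K) (a x y : A) : Prop where
  pow_a : a ^ (n * (n - 1) * m) = 1
  pow_x : x ^ n = β₁ • (a ^ (n₁ * n) - a ^ (n * m * n₂))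
  pow_y : y ^ n = β₂ • (a ^ (n₁ * n) - a ^ (n₃ * m * n))
  x_mul_a : x * a = q • (a * x)
  y_mul_a : y * a = q⁻¹ • (a * y)
  y_mul_x : y * x - (q⁻¹) ^ n₁ • (x * y) = β₃ • (a ^ (2 * n₁) - a ^ (m * n * (n₂ + n₃)))

def integralCore (n m : ℕ) (a x y : A) : A :=
  (∑ i ∈ range (n * (n - 1) * m), a ^ i) * x ^ (n - 1) * y ^ (n - 1)

namespace HRelations

variable {n m n₁ n₂ n₃ : ℕ} {q β₁ β₂ β₃ : K} {a x y : A}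

theorem mul_pow_x_eq_zero (H : HRelations n m n₁ n₂ n₃ q β₁ β₂ β₃ a x y) {u : A} {c : K}
    (hu : u * a = c • u) (hc : c ^ n = 1) : u * x ^ n = 0 := by
  rw [H.pow_x]
  exact mul_smul_pow_sub_pow_eq_zero hu hc (dvd_mul_left _ _)
    (dvd_mul_of_dvd_left (dvd_mul_right _ _) _) _

theorem mul_pow_y_eq_zero (H : HRelations n m n₁ n₂ n₃ q β₁ β₂ β₃ a x y) {u : A} {c : K}
    (hu : u * a = c • u) (hc : c ^ n = 1) : u * y ^ n = 0 := by
  rw [H.pow_y]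
  exact mul_smul_pow_sub_pow_eq_zero hu hc (dvd_mul_left _ _) (dvd_mul_left _ _) _

theorem twistedSum_mul_a (H : HRelations n m n₁ n₂ n₃ q β₁ β₂ β₃ a x y) {r : K}
    (hr : r ^ n = 1) :
    twistedSum a r (n * (n - 1) * m) * a = r⁻¹ • twistedSum a r (n * (n - 1) * m) :=
  twistedSum_mul H.pow_a (pow_eq_one_of_dvd hr (dvd_mul_of_dvd_left (dvd_mul_right _ _) _))

theorem y_mul_pow_x_succ (H : HRelations n m n₁ n₂ n₃ q β₁ β₂ β₃ a x y) (hq0 : q ≠ 0)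
    (hqn : q ^ n = 1) (k : ℕ) :
    y * x ^ (k + 1) = ((q⁻¹) ^ n₁) ^ (k + 1) • (x ^ (k + 1) * y) +
      (β₃ * ∑ j ∈ range (k + 1), ((q⁻¹) ^ n₁) ^ j) •
        (x ^ k * (((q⁻¹) ^ n₁) ^ k • a ^ (2 * n₁) - a ^ (m * n * (n₂ + n₃)))) := by
  have hax (e : ℕ) : a ^ e * x = (q⁻¹) ^ e • (x * a ^ e) := by
    rw [inv_pow, eq_inv_smul_iff₀ (pow_ne_zero _ hq0), mul_pow_eq_smul_pow_mul H.x_mul_a]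
  have hQ : (q⁻¹) ^ (m * n * (n₂ + n₃)) = 1 :=
    pow_eq_one_of_dvd (by rw [inv_pow, hqn, inv_one]) ((dvd_mul_left n m).mul_right _)
  refine mul_pow_succ_eq_of_sub_eq H.y_mul_x ?_ ?_ k
  · rw [hax, ← pow_mul, mul_comm]
  · rw [hax, hQ, one_smul]

theorem pow_succ_y_mul_x (H : HRelations n m n₁ n₂ n₃ q β₁ β₂ β₃ a x y) (hqn : q ^ n = 1)
    (k : ℕ) :
    y ^ (k + 1) * x = ((q⁻¹) ^ n₁) ^ (k + 1) • (x * y ^ (k + 1)) +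
      (β₃ * ∑ j ∈ range (k + 1), ((q⁻¹) ^ n₁) ^ j) •
        ((((q⁻¹) ^ n₁) ^ k • a ^ (2 * n₁) - a ^ (m * n * (n₂ + n₃))) * y ^ k) := by
  have hQ : (q⁻¹) ^ (m * n * (n₂ + n₃)) = 1 :=
    pow_eq_one_of_dvd (by rw [inv_pow, hqn, inv_one]) ((dvd_mul_left n m).mul_right _)
  refine pow_succ_mul_eq_of_sub_eq H.y_mul_x ?_ ?_ k
  · rw [mul_pow_eq_smul_pow_mul H.y_mul_a, ← pow_mul, mul_comm]
  · rw [mul_pow_eq_smul_pow_mul H.y_mul_a, hQ, one_smul]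

theorem generators_mul_integralCore (H : HRelations n m n₁ n₂ n₃ q β₁ β₂ β₃ a x y) (hn : 2 ≤ n)
    (hqn : q ^ n = 1) :
    a * integralCore n m a x y = integralCore n m a x y ∧ x * integralCore n m a x y = 0 ∧
      y * integralCore n m a x y = 0 := by
  obtain ⟨k, rfl⟩ : ∃ k, n = k + 2 := ⟨n - 2, by omega⟩
  have hq0 : q ≠ 0 := by rintro rfl; simp at hqn
  have hqin : q⁻¹ ^ (k + 2) = 1 := by rw [inv_pow, hqn, inv_one]
  have hS := H.twistedSum_mul_a (one_pow _)
  have hSq := H.twistedSum_mul_a hqn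
  have hSqi := H.twistedSum_mul_a hqin
  simp only [integralCore, ← twistedSum_one (K := K), inv_one, one_smul, inv_inv,
    show k + 2 - 1 = k + 1 from rfl] at hS hSq hSqi ⊢
  refine ⟨?_, ?_, ?_⟩
  · rw [← mul_assoc, ← mul_assoc, mul_twistedSum (q := (1 : K)) (one_smul K (a * a)).symm,
      one_mul, hS]
  · rw [← mul_assoc, ← mul_assoc, mul_twistedSum H.x_mul_a, mul_one, mul_assoc _ x, ← pow_succ',
      H.mul_pow_x_eq_zero hSq (by rw [inv_pow, hqn, inv_one]), zero_mul]
  · have hw1 := mul_pow_mul_eq_smul hSqi H.x_mul_a (k + 1)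
    have hw0 := mul_pow_mul_eq_smul hSqi H.x_mul_a k
    rw [← pow_succ', hqn] at hw1
    rw [← pow_succ', eq_inv_of_mul_eq_one_left (a := q ^ (k + 1)) (by rw [← pow_succ, hqn])] at hw0
    rw [← mul_assoc, ← mul_assoc, mul_twistedSum H.y_mul_a, mul_one, mul_assoc _ y,
      H.y_mul_pow_x_succ hq0 hqn, mul_add, add_mul, mul_smul_comm, mul_smul_comm, smul_mul_assoc,
      smul_mul_assoc, ← mul_assoc, ← mul_assoc, mul_assoc _ y, ← pow_succ',
      H.mul_pow_y_eq_zero hw1 (one_pow _),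
      mul_relator_eq_zero hw0 hqin ((dvd_mul_left _ m).mul_right _), smul_zero, zero_mul,
      smul_zero, add_zero]

theorem integralCore_mul_generators (H : HRelations n m n₁ n₂ n₃ q β₁ β₂ β₃ a x y) (hn : 2 ≤ n)
    (hqn : q ^ n = 1) :
    integralCore n m a x y * a = integralCore n m a x y ∧ integralCore n m a x y * x = 0 ∧
      integralCore n m a x y * y = 0 := by
  obtain ⟨k, rfl⟩ : ∃ k, n = k + 2 := ⟨n - 2, by omega⟩
  have hqin : q⁻¹ ^ (k + 2) = 1 := by rw [inv_pow, hqn, inv_one]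
  have hS := H.twistedSum_mul_a (one_pow _)
  simp only [integralCore, ← twistedSum_one (K := K), inv_one, one_smul,
    show k + 2 - 1 = k + 1 from rfl] at hS ⊢
  have hSx := mul_pow_mul_eq_smul (c := 1) (by rwa [one_smul]) H.x_mul_a (k + 1)
  rw [one_mul, eq_inv_of_mul_eq_one_left (a := q ^ (k + 1)) (by rw [← pow_succ, hqn])] at hSx
  refine ⟨?_, ?_, ?_⟩
  · rw [mul_pow_mul_eq_smul hSx H.y_mul_a, ← pow_succ', hqin, one_smul]
  · rw [mul_assoc, H.pow_succ_y_mul_x hqn, mul_add, mul_smul_comm, mul_smul_comm,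
      ← mul_assoc _ x, mul_assoc _ (x ^ (k + 1)) x, ← pow_succ, ← mul_assoc _ _ (y ^ k),
      H.mul_pow_x_eq_zero (c := 1) (by rwa [one_smul]) (one_pow _),
      mul_relator_eq_zero hSx hqin ((dvd_mul_left _ m).mul_right _), zero_mul, zero_mul, smul_zero,
      smul_zero, add_zero]
  · rw [mul_assoc, ← pow_succ, H.mul_pow_y_eq_zero hSx hqin]

theorem isTwoSidedIntegral_integralCore (H : HRelations n m n₁ n₂ n₃ q β₁ β₂ β₃ a x y)
    (hn : 2 ≤ n) (hqn : q ^ n = 1) (hgen : Algebra.adjoin K ({a, x, y} : Set A) = ⊤)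
    {ε : A →ₐ[K] K} (hεa : ε a = 1) (hεx : ε x = 0) (hεy : ε y = 0) :
    IsTwoSidedIntegral ε (integralCore n m a x y) := by
  obtain ⟨ha, hx, hy⟩ := H.generators_mul_integralCore hn hqn
  obtain ⟨ha', hx', hy'⟩ := H.integralCore_mul_generators hn hqn
  refine isTwoSidedIntegral_of_adjoin_eq_top hgen ε ?_
  rintro s (rfl | rfl | rfl) <;> simp_all

end HRelations

end Presentation

theorem stmt6_general {K A : Type*} [Field K] [Ring A] [Algebra K A]
    (n m n₁ n₂ n₃ : ℕ) (hn : 2 ≤ n)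
    (q : K) (hq : IsPrimitiveRoot q n)
    (β₁ β₂ β₃ : K) (a x y : A)
    (haN : a ^ (n * (n - 1) * m) = 1)
    (hxn : x ^ n = β₁ • (a ^ (n₁ * n) - a ^ (n * m * n₂)))
    (hyn : y ^ n = β₂ • (a ^ (n₁ * n) - a ^ (n₃ * m * n)))
    (hxa : x * a = q • (a * x)) (hya : y * a = q⁻¹ • (a * y))
    (hyx : y * x - (q⁻¹) ^ n₁ • (x * y) = β₃ • (a ^ (2 * n₁) - a ^ (m * n * (n₂ + n₃))))
    (hgen : Algebra.adjoin K ({a, x, y} : Set A) = ⊤)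
    (ε : A →ₐ[K] K) (hεa : ε a = 1) (hεx : ε x = 0) (hεy : ε y = 0) :
    let N : ℕ := n * (n - 1) * m
    let lam : A := ((N : K)⁻¹) • ((∑ i ∈ Finset.range N, a ^ i) * x ^ (n - 1) * y ^ (n - 1))
    (∀ h : A, h * lam = ε h • lam ∧ lam * h = ε h • lam) ∧
    ε lam = 0 ∧
    (lam ≠ 0 → ¬ IsSemisimpleRing A) := by
  intro N lam
  have H : HRelations n m n₁ n₂ n₃ q β₁ β₂ β₃ a x y := ⟨haN, hxn, hyn, hxa, hya, hyx⟩
  have hlam : IsTwoSidedIntegral ε lam :=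
    (H.isTwoSidedIntegral_integralCore hn hq.pow_eq_one hgen hεa hεx hεy).smul _
  have hεlam : ε lam = 0 := by
    simp [lam, hεx, zero_pow (show n - 1 ≠ 0 by omega)]
  exact ⟨hlam, hεlam, fun hne _ => hne (IsSemisimpleRing.eq_zero_of_mul_eq_smul
    (fun h => (hlam h).2) hεlam)⟩

/-- `λ = (1/N)(∑ a^i) x^{n-1} y^{n-1}` is a two-sided integral of `H_{α,β}` with
`ε(λ) = 0`, so `H_{α,β}` is not semisimple. -/
theorem stmt6 {K A : Type*} [Field K] [CharZero K] [Ring A] [Algebra K A]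
    (n m n₁ n₂ n₃ : ℕ) (hn : 2 ≤ n) (hm : 1 ≤ m)
    (q : K) (hq : IsPrimitiveRoot q n)
    (β₁ β₂ β₃ : K) (a x y : A)
    (haN : a ^ (n * (n - 1) * m) = 1)
    (hxn : x ^ n = β₁ • (a ^ (n₁ * n) - a ^ (n * m * n₂)))
    (hyn : y ^ n = β₂ • (a ^ (n₁ * n) - a ^ (n₃ * m * n)))
    (hxa : x * a = q • (a * x)) (hya : y * a = q⁻¹ • (a * y))
    (hyx : y * x - (q⁻¹) ^ n₁ • (x * y) = β₃ • (a ^ (2 * n₁) - a ^ (m * n * (n₂ + n₃))))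
    (hgen : Algebra.adjoin K ({a, x, y} : Set A) = ⊤)
    (ε : A →ₐ[K] K) (hεa : ε a = 1) (hεx : ε x = 0) (hεy : ε y = 0) :
    let N : ℕ := n * (n - 1) * m
    let lam : A := ((N : K)⁻¹) • ((∑ i ∈ Finset.range N, a ^ i) * x ^ (n - 1) * y ^ (n - 1))
    (∀ h : A, h * lam = ε h • lam ∧ lam * h = ε h • lam) ∧
    ε lam = 0 ∧
    (lam ≠ 0 → ¬ IsSemisimpleRing A) :=
  stmt6_general n m n₁ n₂ n₃ hn q hq β₁ β₂ β₃ a x y haN hxn hyn hxa hya hyx hgen ε hεa hεx hεy
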